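/- arXiv:2508.09720 — 9 statements merged into one kernel-verified Lean document; each statement's English description precedes it below -/
import Mathlib

section
/- For a connected hypergraph H with sink q, all maximal H-parking functions have the same sum of entries (degree). Consequently the degree sequence of H-parking functions is a pure O-sequence. -/
open scoped Classical

def degT {V : Type*} [DecidableEq V] (E : Finset (Finset V)) (T : Finset V) (i : V) : ℕ :=
  (E.filter fun e => i ∈ e ∧ ¬ e ⊆ T).card

def IsHParking {V : Type*} [Fintype V] [DecidableEq V] (E : Finset (Finset V)) (q : V)
    (c : V → ℕ) : Prop :=
  ∀ T : Finset V, T.Nonempty → (∀ i ∈ T, i ≠ q) → ∃ i ∈ T, c i < degT E T i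

def HConnected {V : Type*} (E : Finset (Finset V)) : Prop :=
  ∀ v w : V, Relation.ReflTransGen (fun a b => ∃ e ∈ E, a ∈ e ∧ b ∈ e) v w

/-- A maximal `H`-parking function (maximal in the coordinatewise order among
configurations vanishing at the sink). -/
def IsMaximalHParking {V : Type*} [Fintype V] [DecidableEq V] (E : Finset (Finset V)) (q : V)
    (c : V → ℕ) : Prop :=
  c q = 0 ∧ IsHParking E q c ∧
    ∀ c' : V → ℕ, c' q = 0 → IsHParking E q c' → c ≤ c' → c' = c

/-!
Burning algorithm. If `c` is parking on a set `T` of non-sink vertices, some `i ∈ T` has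
`c i < deg_T(i)`; burning `i` and recursing on `T \ {i}` orders the non-sink vertices. Raising
every `c i` to `deg_{T_i}(i) - 1`, where `T_i` is the unburnt set when `i` burns, keeps `c`
parking, so a maximal `c` equals this tight configuration. Its degree is
`∑ᵢ deg_{T_i}(i) - n`, and in that sum each edge `e` counts each of its non-sink vertices
except, when `q ∉ e`, the one burnt last. Hence every maximal `c` has degree
`∑ₑ (|e| - 1) - n`.
-/

open Finset Function

section Burning

variable {V : Type*} [DecidableEq V] (E : Finset (Finset V))

theorem degT_le_degT_of_subset {T T' : Finset V} (h : T ⊆ T') (i : V) :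
    degT E T' i ≤ degT E T i := by
  refine card_le_card fun e he => ?_
  simp only [mem_filter] at he ⊢
  exact ⟨he.1, he.2.1, fun hT => he.2.2 (hT.trans h)⟩

def IsParkingOn (S : Finset V) (c : V → ℕ) : Prop :=
  ∀ T ⊆ S, T.Nonempty → ∃ i ∈ T, c i < degT E T i

variable {E}

theorem IsParkingOn.mono {S S' : Finset V} {c : V → ℕ} (hc : IsParkingOn E S' c) (h : S ⊆ S') :
    IsParkingOn E S c :=
  fun T hT => hc T (hT.trans h)

theorem IsParkingOn.update_insert {S : Finset V} {c : V → ℕ} {i : V} {a : ℕ}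
    (hc : IsParkingOn E S c) (ha : a < degT E (insert i S) i) :
    IsParkingOn E (insert i S) (update c i a) := by
  intro T hT hne
  by_cases hiT : i ∈ T
  · exact ⟨i, hiT, by simpa using ha.trans_le (degT_le_degT_of_subset E hT i)⟩
  · obtain ⟨j, hjT, hj⟩ := hc T ((subset_insert_iff_of_notMem hiT).mp hT) hne
    have hji : j ≠ i := ne_of_mem_of_not_mem hjT hiT
    exact ⟨j, hjT, by simpa [hji] using hj⟩

variable (E)

/-- The sum of `deg_{T_i}(i)` over any burning order of `T`: an edge `e` contributes each of its
vertices in `T`, except the last one burnt when `e ⊆ T`. -/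
def burnDegree (T : Finset V) : ℕ :=
  ∑ e ∈ E, ((e ∩ T).card - if e ⊆ T then 1 else 0)

theorem burnDegree_empty : burnDegree E ∅ = 0 := by
  simp [burnDegree]

theorem degT_insert_add_burnDegree {S : Finset V} {i : V} (hi : i ∉ S) :
    degT E (insert i S) i + burnDegree E S = burnDegree E (insert i S) := by
  rw [degT, card_filter, burnDegree, burnDegree, ← sum_add_distrib]
  refine sum_congr rfl fun e _ => ?_
  by_cases hie : i ∈ e
  · have heS : ¬ e ⊆ S := fun h => hi (h hie)
    rw [inter_insert_of_mem hie, card_insert_of_notMem (by simp [hi]), if_neg heS]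
    by_cases heiS : e ⊆ insert i S <;> simp [hie, heiS, add_comm]
  · simp [hie, inter_insert_of_notMem hie, subset_insert_iff_of_notMem hie]

theorem burnDegree_univ_erase [Fintype V] (q : V) :
    burnDegree E (univ.erase q) = ∑ e ∈ E, (e.card - 1) := by
  refine sum_congr rfl fun e _ => ?_
  by_cases hqe : q ∈ e
  · have he : ¬ e ⊆ univ.erase q := fun h => by simpa using h hqe
    rw [if_neg he, inter_erase, inter_univ, card_erase_of_mem hqe, Nat.sub_zero]
  · have he : e ⊆ univ.erase q := fun x hx =>
      mem_erase.mpr ⟨ne_of_mem_of_not_mem hx hqe, mem_univ x⟩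
    rw [if_pos he, inter_eq_left.mpr he]

variable {E}

theorem IsParkingOn.exists_le_sum_add_card_eq [Fintype V] {T : Finset V} {c : V → ℕ}
    (hc : IsParkingOn E T c) :
    ∃ c' : V → ℕ, (∀ i ∈ T, c i ≤ c' i) ∧ (∀ i ∉ T, c' i = 0) ∧ IsParkingOn E T c' ∧
      ∑ i, c' i + T.card = burnDegree E T := by
  induction T using Finset.strongInduction generalizing c with
  | H T ih =>
  rcases T.eq_empty_or_nonempty with rfl | hT
  · refine ⟨0, by simp, by simp, fun U hU hne => ?_, by simp [burnDegree_empty]⟩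
    exact absurd (subset_empty.mp hU) hne.ne_empty
  obtain ⟨i, hiT, hi⟩ := hc T subset_rfl hT
  obtain ⟨c', hle, hzero, hpark, hsum⟩ := ih (T.erase i) (erase_ssubset hiT)
    (hc.mono (erase_subset i T))
  have hT_eq : insert i (T.erase i) = T := insert_erase hiT
  have hi_erase : i ∉ T.erase i := notMem_erase i T
  refine ⟨update c' i (degT E T i - 1), fun j hj => ?_, fun j hj => ?_, ?_, ?_⟩
  · rcases eq_or_ne j i with rfl | hji
    · simp only [update_self]; omega
    · simpa [hji] using hle j (mem_erase.mpr ⟨hji, hj⟩)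
  · have hji : j ≠ i := fun h => hj (h ▸ hiT)
    simpa [hji] using hzero j fun h => hj (mem_of_mem_erase h)
  · rw [← hT_eq] at hi ⊢
    exact hpark.update_insert (by omega)
  · have hci : c' i = 0 := hzero i hi_erase
    have hdeg := degT_insert_add_burnDegree E hi_erase
    rw [hT_eq] at hdeg
    rw [sum_update_of_mem (mem_univ i), sdiff_singleton_eq_erase, sum_erase univ hci,
      ← card_erase_add_one hiT]
    omega

end Burning

section Parking

variable {V : Type*} [Fintype V] [DecidableEq V] {E : Finset (Finset V)} {q : V}

theorem isHParking_iff_isParkingOn {c : V → ℕ} :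
    IsHParking E q c ↔ IsParkingOn E (univ.erase q) c := by
  simp only [IsHParking, IsParkingOn, subset_iff, mem_erase, mem_univ, and_true]
  exact ⟨fun h T hT hne => h T hne hT, fun h T hne hT => h T hT hne⟩

theorem IsHParking.of_le {c c' : V → ℕ} (hc' : IsHParking E q c') (h : ∀ i, c i ≤ c' i) :
    IsHParking E q c := fun T hne hT =>
  let ⟨i, hi, hlt⟩ := hc' T hne hT
  ⟨i, hi, (h i).trans_lt hlt⟩

theorem IsMaximalHParking.sum_add_card_eq {c : V → ℕ} (hc : IsMaximalHParking E q c) :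
    ∑ i, c i + (univ.erase q).card = ∑ e ∈ E, (e.card - 1) := by
  obtain ⟨hq, hpark, hmax⟩ := hc
  obtain ⟨c', hle, hzero, hpark', hsum⟩ :=
    (isHParking_iff_isParkingOn.mp hpark).exists_le_sum_add_card_eq
  have hq' : c' q = 0 := hzero q (notMem_erase q univ)
  have hcc' : c ≤ c' := fun j => by
    rcases eq_or_ne j q with rfl | hj
    · rw [hq, hq']
    · exact hle j (mem_erase.mpr ⟨hj, mem_univ j⟩)
  rw [← hmax c' hq' (isHParking_iff_isParkingOn.mpr hpark') hcc', hsum, burnDegree_univ_erase]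

end Parking

theorem maximalHParking_same_degree_general {V : Type*} [Fintype V] [DecidableEq V]
    (E : Finset (Finset V)) (q : V) :
    (∀ c c' : V → ℕ, IsHParking E q c' → (∀ i, c i ≤ c' i) → IsHParking E q c) ∧
    (∀ c c' : V → ℕ, IsMaximalHParking E q c → IsMaximalHParking E q c' →
      ∑ i : V, c i = ∑ i : V, c' i) := by
  refine ⟨fun c c' hc' hle => hc'.of_le hle, fun c c' hc hc' => ?_⟩
  have h := hc.sum_add_card_eq
  have h' := hc'.sum_add_card_eq
  omega

/-- For a connected hypergraph `H` with sink `q`, the set of `H`-parking functions is an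
order ideal (downward closed), and all maximal `H`-parking functions have the same degree
(sum of entries); hence the degree sequence of `H`-parking functions is a pure `O`-sequence. -/
theorem maximalHParking_same_degree {V : Type*} [Fintype V] [DecidableEq V]
    (E : Finset (Finset V)) (q : V) (hconn : HConnected E) :
    (∀ c c' : V → ℕ, IsHParking E q c' → (∀ i, c i ≤ c' i) → IsHParking E q c) ∧
    (∀ c c' : V → ℕ, IsMaximalHParking E q c → IsMaximalHParking E q c' →
      ∑ i : V, c i = ∑ i : V, c' i) :=
  maximalHParking_same_degree_general E q
end

section
/- The H-parking functions of the complete d-uniform hypergraph K_{n+1}^d (with any fixed sink) are exactly the u-parking functions for the vector u = (u_1,...,u_n), where u_k = C(n,d-1) − C(n−k,d-1) for 1 ≤ k ≤ n+1−d and u_k = C(n,d-1) for n−d+2 ≤ k ≤ n. -/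
open scoped Classical

/-- Edge set of the complete `d`-uniform hypergraph on the vertex type `V`. -/
def completeEdges (V : Type*) [Fintype V] [DecidableEq V] (d : ℕ) : Finset (Finset V) :=
  Finset.univ.powersetCard d

/-- `c` is a `u`-parking function: some nondecreasing rearrangement of `c` is
coordinatewise strictly below `u`. -/
def IsUParking {n : ℕ} (u c : Fin n → ℕ) : Prop :=
  ∃ σ : Equiv.Perm (Fin n), Monotone (fun i => c (σ i)) ∧ ∀ i, c (σ i) < u i

/-!
In the complete hypergraph a vertex `i ∈ T` lies in `C(n, d-1)` edges, `C(#T - 1, d-1)` of them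
inside `T`, so `deg_T(i) = g(#T)` depends only on the size of `T`. The parking condition then asks
that every set `A` of nonsink vertices contains a vertex with `c < g(#A)`. Among sets of a given
size the hardest one is that of the largest values of `c`, and testing exactly these sets is the
`u`-parking condition for the sorted vector, with `u_k = g(n - k + 1)`.
-/

open Finset

lemma card_filter_mem_powersetCard {α : Type*} [DecidableEq α] {s : Finset α} {i : α}
    (hi : i ∈ s) {d : ℕ} (hd : 1 ≤ d) :
    #{e ∈ s.powersetCard d | i ∈ e} = (#s - 1).choose (d - 1) := by
  simpa only [singleton_subset_iff, card_singleton] using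
    card_filter_powersetCard_subset {i} s d (singleton_subset_iff.2 hi) hd

lemma degT_completeEdges {V : Type*} [Fintype V] [DecidableEq V] {n d : ℕ}
    (hV : Fintype.card V = n + 1) (hd : 1 ≤ d) {T : Finset V} {i : V} (hi : i ∈ T) :
    degT (completeEdges V d) T i = n.choose (d - 1) - (#T - 1).choose (d - 1) := by
  have hsplit := card_filter_add_card_filter_not
    (s := {e ∈ (univ : Finset V).powersetCard d | i ∈ e}) (p := (· ⊆ T))
  have hinside : {e ∈ {e ∈ (univ : Finset V).powersetCard d | i ∈ e} | e ⊆ T}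
      = {e ∈ T.powersetCard d | i ∈ e} := by
    ext e
    simp only [mem_filter, mem_powersetCard, subset_univ, true_and]
    tauto
  rw [hinside, card_filter_mem_powersetCard hi hd, card_filter_mem_powersetCard (mem_univ i) hd,
    card_univ, hV, Nat.add_sub_cancel, filter_filter] at hsplit
  rw [degT, completeEdges]
  omega

lemma exists_mem_add_card_le {n : ℕ} {S : Finset (Fin n)} (hS : S.Nonempty) :
    ∃ j ∈ S, (j : ℕ) + #S ≤ n := by
  refine ⟨S.min' hS, S.min'_mem hS, ?_⟩
  have hsub : S ⊆ Ici (S.min' hS) := fun x hx => mem_Ici.2 (S.min'_le x hx)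
  have := card_le_card hsub
  rw [Fin.card_Ici] at this
  omega

theorem forall_exists_lt_card_iff_isUParking {n : ℕ} (b : Fin n → ℕ) (g : ℕ → ℕ) :
    (∀ A : Finset (Fin n), A.Nonempty → ∃ i ∈ A, b i < g #A) ↔
      IsUParking (fun k => g (n - k)) b := by
  constructor
  · intro h
    refine ⟨Tuple.sort b, Tuple.monotone_sort b, fun k => ?_⟩
    obtain ⟨i, hi, hlt⟩ :=
      h ((Ici k).map (Tuple.sort b).toEmbedding) ⟨_, mem_map_of_mem _ (mem_Ici.2 le_rfl)⟩
    obtain ⟨j, hj, rfl⟩ := mem_map.1 hi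
    rw [card_map, Fin.card_Ici] at hlt
    exact (Tuple.monotone_sort b (mem_Ici.1 hj)).trans_lt hlt
  · rintro ⟨σ, hσ, hb⟩ A hA
    obtain ⟨j, hj, hjn⟩ := exists_mem_add_card_le (hA.map (f := σ.symm.toEmbedding))
    rw [card_map] at hjn
    have hA1 := hA.card_pos
    set m : Fin n := ⟨n - #A, by omega⟩
    refine ⟨σ j, by simpa using hj, ?_⟩
    calc b (σ j) ≤ b (σ m) := hσ (Fin.le_def.2 (by simp only [m]; omega))
      _ < g #A := by simpa [m, Nat.sub_sub_self (by omega : #A ≤ n)] using hb m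

theorem isHParking_iff_forall_finset {V α : Type*} [Fintype V] [DecidableEq V]
    (E : Finset (Finset V)) {q : V} (ι : α ≃ {v : V // v ≠ q}) (c : V → ℕ) :
    IsHParking E q c ↔ ∀ A : Finset α, A.Nonempty →
      ∃ a ∈ A, c (ι a) < degT E (A.map (ι.toEmbedding.trans (.subtype _))) (ι a) := by
  set e : α ↪ V := ι.toEmbedding.trans (.subtype _)
  constructor
  · intro h A hA
    obtain ⟨v, hv, hlt⟩ := h (A.map e) (hA.map) (by simp [e, (ι _).2])
    obtain ⟨a, ha, rfl⟩ := mem_map.1 hv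
    exact ⟨a, ha, hlt⟩
  · intro h T hT hTq
    set A := (T.subtype (· ≠ q)).map ι.symm.toEmbedding
    have hAT : A.map e = T := by
      have hcomp : ι.symm.toEmbedding.trans e = .subtype (· ≠ q) := by ext; simp [e]
      rw [map_map, hcomp, subtype_map, filter_true_of_mem hTq]
    obtain ⟨a, ha, hlt⟩ := h A (by simpa [← hAT] using hT)
    exact ⟨ι a, hAT ▸ mem_map_of_mem e ha, hAT ▸ hlt⟩

lemma ite_choose_sub_choose {n d k : ℕ} (hk : k < n) :
    (if k + 1 ≤ n + 1 - d then n.choose (d - 1) - (n - (k + 1)).choose (d - 1)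
      else n.choose (d - 1)) = n.choose (d - 1) - (n - k - 1).choose (d - 1) := by
  split_ifs with h
  · rfl
  · rw [Nat.choose_eq_zero_of_lt (n := n - k - 1) (by omega), Nat.sub_zero]

theorem hparking_complete_iff_uparking_general {V : Type*} [Fintype V] [DecidableEq V]
    {n d : ℕ} (hV : Fintype.card V = n + 1) (hd : 2 ≤ d)
    (q : V) (ι : Fin n ≃ {v : V // v ≠ q}) (c : V → ℕ) :
    IsHParking (completeEdges V d) q c ↔
      IsUParking
        (fun k : Fin n =>
          if (k : ℕ) + 1 ≤ n + 1 - d then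
            Nat.choose n (d - 1) - Nat.choose (n - ((k : ℕ) + 1)) (d - 1)
          else Nat.choose n (d - 1))
        (fun i => c (ι i).1) := by
  set g : ℕ → ℕ := fun t => n.choose (d - 1) - (t - 1).choose (d - 1)
  have hu : (fun k : Fin n =>
      if (k : ℕ) + 1 ≤ n + 1 - d then
        Nat.choose n (d - 1) - Nat.choose (n - ((k : ℕ) + 1)) (d - 1)
      else Nat.choose n (d - 1)) = fun k : Fin n => g (n - k) :=
    funext fun k => ite_choose_sub_choose k.isLt
  rw [hu, ← forall_exists_lt_card_iff_isUParking, isHParking_iff_forall_finset _ ι]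
  refine forall₂_congr fun A _ => exists_congr fun a => and_congr_right fun ha => ?_
  rw [degT_completeEdges hV (by omega) (i := ι a) (mem_map_of_mem _ ha), card_map]

/-- The `H`-parking functions of the complete hypergraph `K_{n+1}^d` (with any fixed sink `q`)
are exactly the `u`-parking functions for
`u_k = C(n,d-1) − C(n−k,d-1)` for `1 ≤ k ≤ n+1−d` and `u_k = C(n,d-1)` otherwise. -/
theorem hparking_complete_iff_uparking {V : Type*} [Fintype V] [DecidableEq V]
    {n d : ℕ} (hV : Fintype.card V = n + 1) (hd : 2 ≤ d) (hdn : d ≤ n + 1)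
    (q : V) (ι : Fin n ≃ {v : V // v ≠ q}) (c : V → ℕ) (hcq : c q = 0) :
    IsHParking (completeEdges V d) q c ↔
      IsUParking
        (fun k : Fin n =>
          if (k : ℕ) + 1 ≤ n + 1 - d then
            Nat.choose n (d - 1) - Nat.choose (n - ((k : ℕ) + 1)) (d - 1)
          else Nat.choose n (d - 1))
        (fun i => c (ι i).1) :=
  hparking_complete_iff_uparking_general hV hd q ι c
end

section
/- For a nondecreasing positive integer vector u = (u_1,...,u_n), the maximal u-parking functions are exactly the vectors obtained by permuting the entries of (u_1 − 1, u_2 − 1, ..., u_n − 1). -/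
open scoped Classical

/-!
A `u`-parking function `c` has `∑ c ≤ ∑ (u - 1)`, and every permutation of `u - 1` is a
`u`-parking function attaining this bound, hence maximal. Conversely, if the sorted
rearrangement `s` of a parking function is not `u - 1`, take the last index `i` with
`s i < u i - 1`: every later entry of `s` equals `u k - 1 ≥ u i - 1 > s i`, so raising `s i` by one
keeps `s` sorted and below `u`, and `c` was not maximal.
-/

open Finset Function

theorem Finset.sum_update_add {ι M : Type*} [Fintype ι] [DecidableEq ι] [AddCommMonoid M]
    (f : ι → M) (j : ι) (a : M) : ∑ i, update f j (f j + a) i = ∑ i, f i + a := by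
  rw [sum_update_of_mem (mem_univ j), sum_eq_add_sum_sdiff_singleton_of_mem (mem_univ j) f,
    add_right_comm]

theorem Monotone.update_succ {α : Type*} [PartialOrder α] [DecidableEq α] {s : α → ℕ}
    (hs : Monotone s) {i : α} (hi : ∀ k, i < k → s i < s k) :
    Monotone (update s i (s i + 1)) := by
  intro a b hab
  simp only [update_apply]
  split_ifs with ha hb hb
  · exact le_rfl
  · subst ha; exact hi b (lt_of_le_of_ne hab (Ne.symm hb))
  · subst hb; exact (hs hab).trans (Nat.le_succ _)
  · exact hs hab

variable {n : ℕ} {u c : Fin n → ℕ}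

theorem IsUParking.sum_le (h : IsUParking u c) : ∑ i, c i ≤ ∑ i, (u i - 1) := by
  obtain ⟨σ, -, hlt⟩ := h
  rw [← Equiv.sum_comp σ c]
  exact sum_le_sum fun i _ => Nat.le_sub_one_of_lt (hlt i)

theorem isUParking_perm_sub_one (hu : Monotone u) (hpos : ∀ i, 1 ≤ u i)
    (σ : Equiv.Perm (Fin n)) : IsUParking u fun i => u (σ i) - 1 :=
  ⟨σ.symm, fun a b hab => by simpa using Nat.sub_le_sub_right (hu hab) 1,
    fun i => by simpa using Nat.sub_lt (hpos i) Nat.one_pos⟩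

theorem exists_isUParking_update_succ (hu : Monotone u) {σ : Equiv.Perm (Fin n)}
    (hmono : Monotone (c ∘ σ)) (hlt : ∀ i, c (σ i) < u i) {i₀ : Fin n}
    (hi₀ : c (σ i₀) + 1 < u i₀) : ∃ j, IsUParking u (update c j (c j + 1)) := by
  obtain ⟨i, hi, hlast⟩ := exists_max_image {k | c (σ k) + 1 < u k} id ⟨i₀, by simpa using hi₀⟩
  simp only [mem_filter, mem_univ, true_and, id] at hi hlast
  have hlater : ∀ k, i < k → (c ∘ σ) i < (c ∘ σ) k := fun k hik => by
    have hk_tight : u k ≤ c (σ k) + 1 := not_lt.mp (mt (hlast k) (not_le.mpr hik))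
    have := hu hik.le
    have := hlt k
    simp only [comp_apply]
    omega
  refine ⟨σ i, σ, ?_, fun k => ?_⟩
  · have := hmono.update_succ hlater
    rwa [comp_apply, ← update_comp_eq_of_injective _ σ.injective] at this
  · rw [update_apply_equiv_apply, Equiv.symm_apply_apply]
    rcases eq_or_ne k i with rfl | hk
    · simpa using hi
    · simpa [hk] using hlt k

/-- For a nondecreasing positive vector `u`, the maximal `u`-parking functions
(those for which increasing any coordinate by 1 destroys the parking property)
are exactly the permutations of `(u_1 − 1, ..., u_n − 1)`. -/
theorem maximal_uparking_iff_perm {n : ℕ} (u : Fin n → ℕ) (hu : Monotone u)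
    (hpos : ∀ i, 1 ≤ u i) (c : Fin n → ℕ) :
    (IsUParking u c ∧ ∀ i, ¬ IsUParking u (Function.update c i (c i + 1))) ↔
      ∃ σ : Equiv.Perm (Fin n), c = fun i => u (σ i) - 1 := by
  constructor
  · rintro ⟨⟨σ, hmono, hlt⟩, hmax⟩
    have hsorted : ∀ i, c (σ i) = u i - 1 := fun i => by
      by_contra hne
      have := hlt i
      obtain ⟨j, hj⟩ := exists_isUParking_update_succ hu hmono hlt (i₀ := i) (by omega)
      exact hmax j hj
    exact ⟨σ.symm, funext fun k => by simpa using hsorted (σ.symm k)⟩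
  · rintro ⟨σ, rfl⟩
    refine ⟨isUParking_perm_sub_one hu hpos σ, fun j hj => ?_⟩
    have := hj.sum_le
    rw [sum_update_add, Equiv.sum_comp σ (fun i => u i - 1)] at this
    omega
end

section
/- Let B be a connected bipartite graph with parts L and R and sink q ∈ R. If c and c' are distinct G-parking functions of B that vanish on L, then the spanning trees T and T' produced by the breadth-first burning (BBB) algorithm applied to c and c' satisfy LR(T) ≠ LR(T'), where LR(T) is the set of edges of T oriented from R to L when all edges of T are oriented toward q. -/
/-!
If the two trees had the same right-to-left edges, their parent functions would agree on every
right vertex. A left vertex `w` carries no chips, so the CP map attaches it by its first edge in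
the breadth-first order: its parent has minimal height among its neighbours, in particular no
higher than its parent in the other tree. Induction on height then shows that both trees assign
every vertex the same height, so the breadth-first orders coincide, and the CP map takes the same
value on every right vertex in both trees; hence `c = c'`.
-/

open scoped Classical

def IsGParking {W : Type*} [Fintype W] (Adj : W → W → Prop) (q : W) (b : W → ℕ) : Prop :=
  ∀ S : Finset W, S.Nonempty → (∀ j ∈ S, j ≠ q) → ∃ j ∈ S,
    b j < (Finset.univ.filter fun w => Adj j w ∧ w ∉ S).card

/-- A `q`-rooted spanning tree, encoded by its parent function `p`: every vertex other
than `q` is adjacent to its parent, and iterating the parent function reaches `q`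
(unique directed path to the root). -/
def IsRootedSpanningTree {W : Type*} (Adj : W → W → Prop) (q : W) (p : W → W) : Prop :=
  p q = q ∧ (∀ w, w ≠ q → Adj w (p w)) ∧ ∀ w, ∃ k, p^[k] w = q

/-- Height of a vertex in the rooted tree with parent function `p`:
the distance (number of tree edges) to the root `q`. -/
noncomputable def theight {W : Type*} (q : W) (p : W → W) (w : W) : ℕ :=
  sInf {k | p^[k] w = q}

/-- The breadth-first tree order: compare first by height, then by the fixed
total order `β` on vertices. -/
def treeLt {W : Type*} (q : W) (p : W → W) (β : W → ℕ) (a b : W) : Prop :=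
  theight q p a < theight q p b ∨ (theight q p a = theight q p b ∧ β a < β b)

/-- The (breadth-first) Chebikin–Pylyavskyy forward map: the value at `j` is the number
of edges out of `j` preceding the tree edge of `j` in the breadth-first tree order.
The BBB algorithm applied to a parking function `c` produces exactly the spanning tree
whose image under this map is `c`. -/
noncomputable def cpMap {W : Type*} [Fintype W] (Adj : W → W → Prop) (q : W)
    (p : W → W) (β : W → ℕ) (j : W) : ℕ :=
  (Finset.univ.filter fun i => Adj j i ∧ treeLt q p β i (p j)).card

section

variable {W : Type*}

lemma theight_eq_zero_iff {q : W} {p : W → W} (hp : ∀ w, ∃ k, p^[k] w = q) {w : W} :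
    theight q p w = 0 ↔ w = q := by
  constructor
  · intro h
    have hmem : p^[theight q p w] w = q := Nat.sInf_mem (hp w)
    rwa [h, Function.iterate_zero_apply] at hmem
  · rintro rfl
    exact Nat.sInf_eq_zero.mpr (Or.inl rfl)

lemma theight_eq_theight_parent_add_one {q : W} {p : W → W} (hp : ∀ w, ∃ k, p^[k] w = q)
    {w : W} (hw : w ≠ q) : theight q p w = theight q p (p w) + 1 := by
  have hle : theight q p w ≤ theight q p (p w) + 1 := by
    apply Nat.sInf_le
    show p^[theight q p (p w) + 1] w = q
    rw [Function.iterate_succ_apply]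
    exact Nat.sInf_mem (hp (p w))
  obtain ⟨m, hm⟩ : ∃ m, theight q p w = m + 1 :=
    Nat.exists_eq_succ_of_ne_zero fun h => hw ((theight_eq_zero_iff hp).mp h)
  have hmem : p^[m + 1] w = q := hm ▸ Nat.sInf_mem (hp w)
  rw [Function.iterate_succ_apply] at hmem
  have : theight q p (p w) ≤ m := Nat.sInf_le hmem
  omega

lemma theight_le_of_parent_le {q : W} {p p' : W → W} (hp : ∀ w, ∃ k, p^[k] w = q)
    (hp' : ∀ w, ∃ k, p'^[k] w = q)
    (hle : ∀ w, w ≠ q → theight q p' (p' w) ≤ theight q p' (p w)) (w : W) :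
    theight q p' w ≤ theight q p w := by
  induction hn : theight q p w using Nat.strong_induction_on generalizing w with
  | _ n ih =>
    by_cases hw : w = q
    · rw [(theight_eq_zero_iff hp').mpr hw]
      exact Nat.zero_le n
    · have hpw := theight_eq_theight_parent_add_one hp hw
      calc theight q p' w = theight q p' (p' w) + 1 := theight_eq_theight_parent_add_one hp' hw
        _ ≤ theight q p' (p w) + 1 := Nat.add_le_add_right (hle w hw) 1
        _ ≤ theight q p (p w) + 1 := Nat.add_le_add_right (ih _ (by omega) (p w) rfl) 1
        _ = n := by omega

lemma theight_parent_le_of_cpMap_eq_zero [Fintype W] {Adj : W → W → Prop} {q : W}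
    {p : W → W} {β : W → ℕ} {j i : W} (hji : Adj j i) (h0 : cpMap Adj q p β j = 0) :
    theight q p (p j) ≤ theight q p i := by
  rw [cpMap, Finset.card_eq_zero, Finset.filter_eq_empty_iff] at h0
  by_contra hlt
  exact h0 (Finset.mem_univ i) ⟨hji, Or.inl (not_le.mp hlt)⟩

lemma cpMap_eq_of_theight_eq [Fintype W] {Adj : W → W → Prop} {q : W} {p p' : W → W}
    {β : W → ℕ} (hh : ∀ w, theight q p w = theight q p' w) {j : W} (hj : p j = p' j) :
    cpMap Adj q p β j = cpMap Adj q p' β j := by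
  unfold cpMap
  congr 1
  exact Finset.filter_congr fun i _ => by simp only [treeLt, hh, hj]

end

theorem bbb_trees_not_burning_equivalent_general {W : Type*} [Fintype W]
    (Adj : W → W → Prop)
    (side : W → Bool)
    (q : W) (β : W → ℕ)
    (c c' : W → ℕ)
    (hcL : ∀ w, side w = false → c w = 0) (hc'L : ∀ w, side w = false → c' w = 0)
    (hne : ∃ w, w ≠ q ∧ c w ≠ c' w)
    (p p' : W → W)
    (hp : IsRootedSpanningTree Adj q p) (hp' : IsRootedSpanningTree Adj q p')
    (hmap : ∀ w, w ≠ q → cpMap Adj q p β w = c w)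
    (hmap' : ∀ w, w ≠ q → cpMap Adj q p' β w = c' w) :
    ∃ w, w ≠ q ∧ side w = true ∧ p w ≠ p' w := by
  by_contra! hagree
  have hle : ∀ w, w ≠ q → theight q p (p w) ≤ theight q p (p' w) := fun w hw => by
    cases hs : side w
    · exact theight_parent_le_of_cpMap_eq_zero (hp'.2.1 w hw) ((hmap w hw).trans (hcL w hs))
    · rw [hagree w hw hs]
  have hle' : ∀ w, w ≠ q → theight q p' (p' w) ≤ theight q p' (p w) := fun w hw => by
    cases hs : side w
    · exact theight_parent_le_of_cpMap_eq_zero (hp.2.1 w hw) ((hmap' w hw).trans (hc'L w hs))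
    · rw [hagree w hw hs]
  have hheight : ∀ w, theight q p w = theight q p' w := fun w =>
    le_antisymm (theight_le_of_parent_le hp'.2.2 hp.2.2 hle w)
      (theight_le_of_parent_le hp.2.2 hp'.2.2 hle' w)
  obtain ⟨w, hw, hcw⟩ := hne
  cases hs : side w
  · exact hcw ((hcL w hs).trans (hc'L w hs).symm)
  · exact hcw ((hmap w hw).symm.trans
      ((cpMap_eq_of_theight_eq hheight (hagree w hw hs)).trans (hmap' w hw)))

/-- Let `B` be a connected bipartite graph with parts `L` (`side = false`) and
`R` (`side = true`) and sink `q ∈ R`. If `c ≠ c'` are `G`-parking functions of `B`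
vanishing on `L`, then the spanning trees produced by the BBB algorithm from `c` and `c'`
(i.e. the trees mapping to `c` resp. `c'` under the breadth-first CP map) are not
burning equivalent: some right-to-left tree edge differs. -/
theorem bbb_trees_not_burning_equivalent {W : Type*} [Fintype W] [DecidableEq W]
    (Adj : W → W → Prop) (hsymm : ∀ a b, Adj a b → Adj b a)
    (hconn : ∀ a b, Relation.ReflTransGen Adj a b)
    (side : W → Bool) (hbip : ∀ a b, Adj a b → side a ≠ side b)
    (q : W) (hq : side q = true) (β : W → ℕ) (hβ : Function.Injective β)
    (c c' : W → ℕ)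
    (hc : IsGParking Adj q c) (hc' : IsGParking Adj q c')
    (hcL : ∀ w, side w = false → c w = 0) (hc'L : ∀ w, side w = false → c' w = 0)
    (hne : ∃ w, w ≠ q ∧ c w ≠ c' w)
    (p p' : W → W)
    (hp : IsRootedSpanningTree Adj q p) (hp' : IsRootedSpanningTree Adj q p')
    (hmap : ∀ w, w ≠ q → cpMap Adj q p β w = c w)
    (hmap' : ∀ w, w ≠ q → cpMap Adj q p' β w = c' w) :
    ∃ w, w ≠ q ∧ side w = true ∧ p w ≠ p' w :=
  bbb_trees_not_burning_equivalent_general Adj side q β c c' hcL hc'L hne p p' hp hp' hmap hmap'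
end

section
/- If T and T' are burning equivalent spanning trees of the bipartite incidence graph B(H) of a hypergraph H, then for every hyperedge e ∈ E(H), the degree of the vertex e in T equals the degree of e in T'. Consequently burning equivalent spanning trees give rise to the same hypertree f : E(H) → N, f(e) = max(deg_T(e) − 1, 0). -/
/-!
A hyperedge node `e` is adjacent in a spanning tree of `B(H)` to its parent and to its
children. Since `B(H)` is bipartite, the children of `e` are vertex nodes, and burning
equivalence says exactly that vertex nodes other than the root have the same parent in both
trees; so `e` has the same children, hence the same degree, in both.
-/

open scoped Classical

def bAdj {V : Type*} (E : Finset (Finset V)) :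
    ({e : Finset V // e ∈ E} ⊕ V) → ({e : Finset V // e ∈ E} ⊕ V) → Prop
  | Sum.inl e, Sum.inr v => v ∈ e.1
  | Sum.inr v, Sum.inl e => v ∈ e.1
  | _, _ => False

/-- Degree of a vertex `x` in the spanning tree with parent function `p`:
the number of children of `x` plus one for the edge to its own parent (if `x` is
not the root). -/
noncomputable def treeDeg {V : Type*} [Fintype V] [DecidableEq V] (E : Finset (Finset V))
    (q : V) (p : ({e : Finset V // e ∈ E} ⊕ V) → ({e : Finset V // e ∈ E} ⊕ V))
    (x : {e : Finset V // e ∈ E} ⊕ V) : ℕ :=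
  (Finset.univ.filter fun w => w ≠ Sum.inr q ∧ p w = x).card +
    (if x ≠ Sum.inr q then 1 else 0)

theorem IsRootedSpanningTree.parent_inl_ne_inl {V : Type*} {E : Finset (Finset V)} {q : V}
    {p : ({e : Finset V // e ∈ E} ⊕ V) → ({e : Finset V // e ∈ E} ⊕ V)}
    (hp : IsRootedSpanningTree (bAdj E) (Sum.inr q) p) (e e' : {e : Finset V // e ∈ E}) :
    p (Sum.inl e) ≠ Sum.inl e' := fun h => by
  simpa [h, bAdj] using hp.2.1 (Sum.inl e) Sum.inl_ne_inr

theorem treeDeg_congr_of_parent_eq_iff {V : Type*} [Fintype V] [DecidableEq V]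
    {E : Finset (Finset V)} {q : V}
    {p p' : ({e : Finset V // e ∈ E} ⊕ V) → ({e : Finset V // e ∈ E} ⊕ V)}
    {x : {e : Finset V // e ∈ E} ⊕ V} (h : ∀ w, w ≠ Sum.inr q → (p w = x ↔ p' w = x)) :
    treeDeg E q p x = treeDeg E q p' x := by
  unfold treeDeg
  congr 2
  exact Finset.filter_congr fun w _ => and_congr_right (h w)

/-- Burning equivalent spanning trees of `B(H)` have the same degree at every hyperedge
vertex; consequently they give rise to the same hypertree `f(e) = max(deg(e) − 1, 0)`. -/
theorem burning_equivalent_same_hypertree {V : Type*} [Fintype V] [DecidableEq V]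
    (E : Finset (Finset V)) (q : V)
    (p p' : ({e : Finset V // e ∈ E} ⊕ V) → ({e : Finset V // e ∈ E} ⊕ V))
    (hp : IsRootedSpanningTree (bAdj E) (Sum.inr q) p)
    (hp' : IsRootedSpanningTree (bAdj E) (Sum.inr q) p')
    (hequiv : ∀ v : V, v ≠ q → p (Sum.inr v) = p' (Sum.inr v)) :
    (∀ e : {e : Finset V // e ∈ E}, treeDeg E q p (Sum.inl e) = treeDeg E q p' (Sum.inl e)) ∧
    ((fun e : {e : Finset V // e ∈ E} => treeDeg E q p (Sum.inl e) - 1) =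
      fun e => treeDeg E q p' (Sum.inl e) - 1) := by
  have hdeg : ∀ e, treeDeg E q p (Sum.inl e) = treeDeg E q p' (Sum.inl e) := fun e =>
    treeDeg_congr_of_parent_eq_iff fun w hw => by
      rcases w with e' | v
      · exact iff_of_false (hp.parent_inl_ne_inl e' e) (hp'.parent_inl_ne_inl e' e)
      · rw [hequiv v fun hvq => hw (hvq ▸ rfl)]
  exact ⟨hdeg, funext fun e => by rw [hdeg e]⟩
end

section
/- Let H be a star hypergraph (every hyperedge contains the sink q). Then the q-rooted spanning trees of H (burning equivalence classes of spanning trees of B(H)) are in bijection with the q-rooted spanning trees of the digraph ←H obtained from B(H) by directing (e,q) for each hyperedge e and (v,e) for each v ∈ e with v ≠ q. -/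
open scoped Classical

/-- Directed adjacency of the digraph `←H` associated to a star hypergraph:
a directed edge `(e, q)` for each hyperedge `e`, and a directed edge `(v, e)`
for each `v ∈ e` with `v ≠ q`. -/
def starAdj {V : Type*} (E : Finset (Finset V)) (q : V) :
    ({e : Finset V // e ∈ E} ⊕ V) → ({e : Finset V // e ∈ E} ⊕ V) → Prop
  | Sum.inl _, Sum.inr v => v = q
  | Sum.inr v, Sum.inl e => v ∈ e.1 ∧ v ≠ q
  | _, _ => False

/-- Burning equivalence on spanning trees of `B(H)`. -/
def burnSetoid {V : Type*} [Fintype V] [DecidableEq V] (E : Finset (Finset V)) (q : V) :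
    Setoid {p : ({e : Finset V // e ∈ E} ⊕ V) → ({e : Finset V // e ∈ E} ⊕ V) //
      IsRootedSpanningTree (bAdj E) (Sum.inr q) p} where
  r p p' := ∀ v : V, v ≠ q → p.1 (Sum.inr v) = p'.1 (Sum.inr v)
  iseqv := ⟨fun _ _ _ => rfl, fun h v hv => (h v hv).symm,
    fun h1 h2 v hv => (h1 v hv).trans (h2 v hv)⟩


/-!
In `B(H)` as well as in `←H`, the parent of a vertex `v ≠ q` in a `q`-rooted tree is a
hyperedge containing `v`. A tree of `←H` is determined by these parents, since every hyperedge
points to `q`; and any choice of such parents also gives a tree of `B(H)` by sending each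
hyperedge to `q`, which is adjacent to it because `H` is a star. Burning equivalence remembers
exactly the parents of the vertices, so both sides are parametrised by the same data.
-/

section StarTrees

variable {V : Type*} {E : Finset (Finset V)} {q : V}

local notation "B" => ({e : Finset V // e ∈ E} ⊕ V)

lemma exists_eq_inl_of_bAdj {v : V} {w : B} (h : bAdj E (Sum.inr v) w) :
    ∃ e, w = Sum.inl e ∧ v ∈ e.1 := by
  rcases w with e | u
  · exact ⟨e, rfl, h⟩
  · exact h.elim

lemma exists_eq_inl_of_starAdj {v : V} {w : B} (h : starAdj E q (Sum.inr v) w) :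
    ∃ e, w = Sum.inl e ∧ v ∈ e.1 := by
  rcases w with e | u
  · exact ⟨e, rfl, h.1⟩
  · exact h.elim

lemma exists_parent_eq_inl {Adj : B → B → Prop}
    (hAdj : ∀ v w, Adj (Sum.inr v) w → ∃ e, w = Sum.inl e ∧ v ∈ e.1) {p : B → B}
    (hp : IsRootedSpanningTree Adj (Sum.inr q) p) {v : V} (hv : v ≠ q) :
    ∃ e, p (Sum.inr v) = Sum.inl e ∧ v ∈ e.1 :=
  hAdj v _ (hp.2.1 _ (Sum.inr_injective.ne hv))

variable [DecidableEq V]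

def hangOnSink (q : V) (p : B → B) : B → B
  | Sum.inl _ => Sum.inr q
  | Sum.inr v => if v = q then Sum.inr q else p (Sum.inr v)

@[simp]
lemma hangOnSink_inl (p : B → B) (e : {e : Finset V // e ∈ E}) :
    hangOnSink q p (Sum.inl e) = Sum.inr q := rfl

@[simp]
lemma hangOnSink_sink (p : B → B) :
    hangOnSink q p (Sum.inr q) = Sum.inr q := if_pos rfl

lemma hangOnSink_inr_of_ne (p : B → B) {v : V} (hv : v ≠ q) :
    hangOnSink q p (Sum.inr v) = p (Sum.inr v) := if_neg hv

lemma hangOnSink_eq_hangOnSink_iff {p p' : B → B} :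
    hangOnSink q p = hangOnSink q p' ↔ ∀ v, v ≠ q → p (Sum.inr v) = p' (Sum.inr v) := by
  refine ⟨fun h v hv => ?_, fun h => funext ?_⟩
  · simpa only [hangOnSink_inr_of_ne _ hv] using congrFun h (Sum.inr v)
  · rintro (e | v)
    · rfl
    · by_cases hv : v = q
      · simp only [hv, hangOnSink_sink]
      · rw [hangOnSink_inr_of_ne _ hv, hangOnSink_inr_of_ne _ hv, h v hv]

lemma isRootedSpanningTree_hangOnSink {Adj : B → B → Prop}
    (hAdj_inl : ∀ e, Adj (Sum.inl e) (Sum.inr q))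
    (hAdj_inr : ∀ v e, v ∈ e.1 → v ≠ q → Adj (Sum.inr v) (Sum.inl e)) {p : B → B}
    (hp : ∀ v, v ≠ q → ∃ e, p (Sum.inr v) = Sum.inl e ∧ v ∈ e.1) :
    IsRootedSpanningTree Adj (Sum.inr q) (hangOnSink q p) := by
  refine ⟨hangOnSink_sink p, ?_, fun w => ⟨2, ?_⟩⟩
  · rintro (e | v) hw
    · exact hAdj_inl e
    · have hv : v ≠ q := fun h => hw (congrArg Sum.inr h)
      obtain ⟨e, he, hve⟩ := hp v hv
      rw [hangOnSink_inr_of_ne p hv, he]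
      exact hAdj_inr v e hve hv
  · rcases w with e | v
    · simp
    · by_cases hv : v = q
      · simp [hv]
      · obtain ⟨e, he, -⟩ := hp v hv
        simp [hangOnSink_inr_of_ne p hv, he]

lemma hangOnSink_eq_self {p : B → B}
    (hp : IsRootedSpanningTree (starAdj E q) (Sum.inr q) p) : hangOnSink q p = p := by
  funext w
  rcases w with e | v
  · have hAdj : starAdj E q (Sum.inl e) (p (Sum.inl e)) := hp.2.1 _ Sum.inl_ne_inr
    rcases h : p (Sum.inl e) with e' | v
    · exact (h ▸ hAdj).elim
    · rw [h] at hAdj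
      rw [hangOnSink_inl, show v = q from hAdj]
  · by_cases hv : v = q
    · rw [hv, hangOnSink_sink, hp.1]
    · exact hangOnSink_inr_of_ne p hv

lemma isRootedSpanningTree_starAdj_hangOnSink {p : B → B}
    (hp : IsRootedSpanningTree (bAdj E) (Sum.inr q) p) :
    IsRootedSpanningTree (starAdj E q) (Sum.inr q) (hangOnSink q p) :=
  isRootedSpanningTree_hangOnSink (fun _ => rfl) (fun _ _ hve hv => ⟨hve, hv⟩)
    fun _ hv => exists_parent_eq_inl (fun _ _ => exists_eq_inl_of_bAdj) hp hv

lemma isRootedSpanningTree_bAdj_of_starAdj (hstar : ∀ e ∈ E, q ∈ e) {p : B → B}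
    (hp : IsRootedSpanningTree (starAdj E q) (Sum.inr q) p) :
    IsRootedSpanningTree (bAdj E) (Sum.inr q) p :=
  hangOnSink_eq_self hp ▸ isRootedSpanningTree_hangOnSink (fun e => hstar e.1 e.2)
    (fun _ _ hve _ => hve)
    fun _ hv => exists_parent_eq_inl (fun _ _ => exists_eq_inl_of_starAdj) hp hv

end StarTrees

theorem star_spanningTrees_equiv_digraph_general {V : Type*} [Fintype V] [DecidableEq V]
    (E : Finset (Finset V)) (q : V) (hstar : ∀ e ∈ E, q ∈ e) :
    Nonempty (Quotient (burnSetoid E q) ≃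
      {p : ({e : Finset V // e ∈ E} ⊕ V) → ({e : Finset V // e ∈ E} ⊕ V) //
        IsRootedSpanningTree (starAdj E q) (Sum.inr q) p}) := by
  let toStar :
      Quotient (burnSetoid E q) → {p // IsRootedSpanningTree (starAdj E q) (Sum.inr q) p} :=
    Quotient.lift (fun p => ⟨hangOnSink q p.1, isRootedSpanningTree_starAdj_hangOnSink p.2⟩)
      fun _ _ h => Subtype.ext (hangOnSink_eq_hangOnSink_iff.2 h)
  refine ⟨Equiv.ofBijective toStar ⟨?_, fun p => ?_⟩⟩
  · rintro ⟨p⟩ ⟨p'⟩ h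
    exact Quotient.sound (hangOnSink_eq_hangOnSink_iff.1 (congrArg Subtype.val h))
  · exact ⟨Quotient.mk _ ⟨p.1, isRootedSpanningTree_bAdj_of_starAdj hstar p.2⟩,
      Subtype.ext (hangOnSink_eq_self p.2)⟩

/-- For a star hypergraph `H` (every hyperedge contains the sink `q`), the `q`-rooted
spanning trees of `H` (burning equivalence classes of spanning trees of `B(H)`) are in
bijection with the `q`-rooted spanning trees of the digraph `←H`. -/
theorem star_spanningTrees_equiv_digraph {V : Type*} [Fintype V] [DecidableEq V]
    (E : Finset (Finset V)) (q : V) (hconn : HConnected E) (hstar : ∀ e ∈ E, q ∈ e) :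
    Nonempty (Quotient (burnSetoid E q) ≃
      {p : ({e : Finset V // e ∈ E} ⊕ V) → ({e : Finset V // e ∈ E} ⊕ V) //
        IsRootedSpanningTree (starAdj E q) (Sum.inr q) p}) :=
  star_spanningTrees_equiv_digraph_general E q hstar
end

section
/- Let H be a hypergraph with sink q, c a chip configuration on the nonsink vertices, and T a nonempty set of nonsink vertices. Then T is ready to fire (every cancellative firing choice for T yields a nonnegative configuration) if and only if deg_T(i) ≤ c_i for all i ∈ T. Consequently, c is superstable if and only if c is an H-parking function. -/
open scoped Classical

/-- `C` is a valid firing choice for the set `T`: each `v ∈ T` sends, along every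
hyperedge `e` containing `v`, a chip to a chosen vertex `C v e ∈ e` different from `v`. -/
def ValidChoice {V : Type*} (E : Finset (Finset V)) (T : Finset V)
    (C : V → Finset V → V) : Prop :=
  ∀ v ∈ T, ∀ e ∈ E, v ∈ e → C v e ∈ e ∧ C v e ≠ v

/-- A firing choice for `T` is cancellative if on every hyperedge `e ⊆ T` the choices
form a permutation of `e` (fixed-point-free since `C v e ≠ v`). -/
def Cancellative {V : Type*} (E : Finset (Finset V)) (T : Finset V)
    (C : V → Finset V → V) : Prop :=
  ∀ e ∈ E, e ⊆ T → Set.BijOn (fun v => C v e) (e : Set V) (e : Set V)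

/-- The number of chips at `i` after firing the set `T` with firing choice `C`:
each `v ∈ T` loses one chip per incident hyperedge, and the chips are passed
according to `C`. -/
def fireResult {V : Type*} [Fintype V] [DecidableEq V] (E : Finset (Finset V))
    (T : Finset V) (C : V → Finset V → V) (c : V → ℕ) (i : V) : ℤ :=
  (c i : ℤ) - (if i ∈ T then ((E.filter fun e => i ∈ e).card : ℤ) else 0)
    + ∑ v ∈ T, ((E.filter fun e => v ∈ e ∧ C v e = i).card : ℤ)

/-- `T` is ready to fire: every valid cancellative firing choice results in a
nonnegative configuration. -/
def ReadyToFire {V : Type*} [Fintype V] [DecidableEq V] (E : Finset (Finset V))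
    (T : Finset V) (c : V → ℕ) : Prop :=
  ∀ C : V → Finset V → V, ValidChoice E T C → Cancellative E T C →
    ∀ i, 0 ≤ fireResult E T C c i

/-!
Firing `T` costs each `i ∈ T` one chip per incident hyperedge. Along a hyperedge `e ⊆ T` a
cancellative choice is a permutation of `e`, so `i` gets exactly one chip back from each such
`e`; the net loss at `i` is therefore `deg_T(i)` minus the chips that `i` receives along
hyperedges leaving `T`, and vertices outside `T` only gain chips. Hence `deg_T(i) ≤ c_i` on `T`
suffices, and it is necessary because one can fire cyclically on hyperedges inside `T` (this
needs `|e| ≥ 2`) and send every other chip out of `T`. The second equivalence is the negation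
of the first, taken over all nonempty `T`.
-/

namespace Hypergraph

open Finset

variable {V : Type*} [DecidableEq V]

theorem card_filter_mem_subset_add_degT (E : Finset (Finset V)) (T : Finset V) (i : V) :
    #{e ∈ E | i ∈ e} = #{e ∈ E | i ∈ e ∧ e ⊆ T} + degT E T i := by
  rw [degT, ← filter_filter, ← filter_filter, card_filter_add_card_filter_not]

theorem card_filter_choice_eq_of_subset {E : Finset (Finset V)} {T : Finset V}
    {C : V → Finset V → V} (hC : Cancellative E T C) {e : Finset V} (he : e ∈ E)
    (heT : e ⊆ T) (i : V) :
    #{v ∈ T | v ∈ e ∧ C v e = i} = if i ∈ e then 1 else 0 := by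
  have hbij := hC e he heT
  split_ifs with hie
  · obtain ⟨v, hv, rfl⟩ := hbij.surjOn (mem_coe.2 hie)
    refine card_eq_one.2 ⟨v, eq_singleton_iff_unique_mem.2 ⟨?_, ?_⟩⟩
    · exact mem_filter.2 ⟨heT hv, hv, rfl⟩
    · intro w hw
      obtain ⟨-, hwe, hwv⟩ := mem_filter.1 hw
      exact hbij.injOn (mem_coe.2 hwe) hv hwv
  · refine card_eq_zero.2 (filter_eq_empty_iff.2 ?_)
    rintro v - ⟨hve, rfl⟩
    exact hie (hbij.mapsTo (mem_coe.2 hve))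

theorem fireResult_of_mem [Fintype V] {E : Finset (Finset V)} {T : Finset V}
    {C : V → Finset V → V} (hC : Cancellative E T C) (c : V → ℕ) {i : V} (hi : i ∈ T) :
    fireResult E T C c i =
      (c i : ℤ) - degT E T i +
        ((∑ e ∈ E with ¬ e ⊆ T, #{v ∈ T | v ∈ e ∧ C v e = i} : ℕ) : ℤ) := by
  have hreceived : ∑ v ∈ T, #{e ∈ E | v ∈ e ∧ C v e = i} =
      #{e ∈ E | i ∈ e ∧ e ⊆ T} +
        ∑ e ∈ E with ¬ e ⊆ T, #{v ∈ T | v ∈ e ∧ C v e = i} := by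
    calc ∑ v ∈ T, #{e ∈ E | v ∈ e ∧ C v e = i}
        = ∑ e ∈ E, #{v ∈ T | v ∈ e ∧ C v e = i} :=
          sum_card_bipartiteAbove_eq_sum_card_bipartiteBelow _
      _ = ∑ e ∈ E with e ⊆ T, #{v ∈ T | v ∈ e ∧ C v e = i}
            + ∑ e ∈ E with ¬ e ⊆ T, #{v ∈ T | v ∈ e ∧ C v e = i} :=
          (sum_filter_add_sum_filter_not _ _ _).symm
      _ = _ := by
          congr 1
          rw [sum_congr rfl fun e he =>
            card_filter_choice_eq_of_subset hC (mem_filter.1 he).1 (mem_filter.1 he).2 i,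
            ← card_filter, filter_filter]
          simp only [and_comm]
  rw [fireResult, if_pos hi, ← Nat.cast_sum, hreceived, card_filter_mem_subset_add_degT E T i]
  push_cast
  ring

theorem fireResult_nonneg_of_notMem [Fintype V] (E : Finset (Finset V)) {T : Finset V}
    (C : V → Finset V → V) (c : V → ℕ) {i : V} (hi : i ∉ T) :
    0 ≤ fireResult E T C c i := by
  rw [fireResult, if_neg hi, sub_zero]
  positivity

theorem formPerm_toList_apply_mem {e : Finset V} {v : V} (hv : v ∈ e) :
    e.toList.formPerm v ∈ e :=
  mem_toList.1 (List.formPerm_apply_mem_of_mem (mem_toList.2 hv))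

noncomputable def outwardChoice (T : Finset V) (v : V) (e : Finset V) : V :=
  if h : (e \ T).Nonempty then h.choose else e.toList.formPerm v

theorem outwardChoice_of_subset {T e : Finset V} (heT : e ⊆ T) (v : V) :
    outwardChoice T v e = e.toList.formPerm v := by
  rw [outwardChoice, dif_neg (not_nonempty_iff_eq_empty.2 (sdiff_eq_empty_iff_subset.2 heT))]

theorem outwardChoice_mem_sdiff {T e : Finset V} (heT : ¬ e ⊆ T) (v : V) :
    outwardChoice T v e ∈ e \ T := by
  have hne : (e \ T).Nonempty := sdiff_nonempty.2 heT
  rw [outwardChoice, dif_pos hne]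
  exact hne.choose_spec

theorem validChoice_outwardChoice {E : Finset (Finset V)} (hE : ∀ e ∈ E, 2 ≤ e.card)
    (T : Finset V) : ValidChoice E T (outwardChoice T) := by
  intro v hv e he hve
  by_cases heT : e ⊆ T
  · rw [outwardChoice_of_subset heT]
    refine ⟨formPerm_toList_apply_mem hve, ?_⟩
    refine (List.formPerm_apply_mem_ne_self_iff _ e.nodup_toList v (mem_toList.2 hve)).2 ?_
    rw [length_toList]
    exact hE e he
  · obtain ⟨hwe, hwT⟩ := mem_sdiff.1 (outwardChoice_mem_sdiff heT v)
    exact ⟨hwe, fun hwv => hwT (by rwa [hwv])⟩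

theorem cancellative_outwardChoice (E : Finset (Finset V)) (T : Finset V) :
    Cancellative E T (outwardChoice T) := by
  intro e _ heT
  have hmaps : Set.MapsTo (fun v => outwardChoice T v e) e e := fun v hv => by
    simpa only [mem_coe, outwardChoice_of_subset heT] using formPerm_toList_apply_mem hv
  refine (e.finite_toSet.injOn_iff_bijOn_of_mapsTo hmaps).1 fun a _ b _ hab => ?_
  simp only [outwardChoice_of_subset heT] at hab
  exact e.toList.formPerm.injective hab

theorem fireResult_outwardChoice [Fintype V] (E : Finset (Finset V)) (T : Finset V)
    (c : V → ℕ) {i : V} (hi : i ∈ T) :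
    fireResult E T (outwardChoice T) c i = (c i : ℤ) - degT E T i := by
  rw [fireResult_of_mem (cancellative_outwardChoice E T) c hi, add_eq_left, Nat.cast_eq_zero]
  refine sum_eq_zero fun e he => card_eq_zero.2 (filter_eq_empty_iff.2 ?_)
  have heT : ¬ e ⊆ T := (mem_filter.1 he).2
  rintro v - ⟨-, hvi⟩
  exact (mem_sdiff.1 (outwardChoice_mem_sdiff heT v)).2 (hvi ▸ hi)

theorem readyToFire_iff_forall_degT_le [Fintype V] {E : Finset (Finset V)}
    (hE : ∀ e ∈ E, 2 ≤ e.card) (T : Finset V) (c : V → ℕ) :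
    ReadyToFire E T c ↔ ∀ i ∈ T, degT E T i ≤ c i := by
  constructor
  · intro hready i hi
    have h := hready _ (validChoice_outwardChoice hE T) (cancellative_outwardChoice E T) i
    rw [fireResult_outwardChoice E T c hi] at h
    omega
  · intro hdeg C _ hC i
    by_cases hi : i ∈ T
    · rw [fireResult_of_mem hC c hi]
      exact add_nonneg (sub_nonneg.2 (Int.ofNat_le.2 (hdeg i hi))) (by positivity)
    · exact fireResult_nonneg_of_notMem E C c hi

end Hypergraph

/-- A nonempty set `T` of nonsink vertices is ready to fire iff `deg_T(i) ≤ c_i` for all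
`i ∈ T`; consequently, `c` is superstable (no nonempty set of nonsink vertices is ready
to fire) iff `c` is an `H`-parking function. -/
theorem readyToFire_iff_degT_and_superstable_iff_hparking {V : Type*} [Fintype V]
    [DecidableEq V] (E : Finset (Finset V)) (q : V) (hE : ∀ e ∈ E, 2 ≤ e.card)
    (c : V → ℕ) :
    (∀ T : Finset V, T.Nonempty → (∀ i ∈ T, i ≠ q) →
      (ReadyToFire E T c ↔ ∀ i ∈ T, degT E T i ≤ c i)) ∧
    ((¬ ∃ T : Finset V, T.Nonempty ∧ (∀ i ∈ T, i ≠ q) ∧ ReadyToFire E T c) ↔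
      IsHParking E q c) := by
  have hready := Hypergraph.readyToFire_iff_forall_degT_le hE (c := c)
  refine ⟨fun T _ _ => hready T, ?_⟩
  simp only [IsHParking, hready, not_exists, not_and, not_forall, not_le, exists_prop]
end

section
/- Let H be a hypergraph with sink q, c a chip configuration, and A a nonempty set of nonsink vertices. If A is ready to fire in H, then for every cycling C of H, the set A is ready to fire in the digraph D_C(H) starting from c (i.e., subtracting the columns of the reduced Laplacian of D_C(H) corresponding to A from c yields a nonnegative vector). -/
/-!
A cycling `σ` is itself a firing choice, `v ↦ σ e v`: on a hyperedge `e` the map `σ e` is a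
single cycle through all of `e`, hence a permutation of `e` without fixed points once
`2 ≤ #e`. So this choice is valid and cancellative, and firing `A` in the hypergraph with it is
literally firing `A` in the digraph `D_σ(H)`.
-/

open scoped Classical

/-- `σ` is a cycling of the hypergraph with edge set `E`. -/
def IsCycling {V : Type*} (E : Finset (Finset V)) (σ : Finset V → V → V) : Prop :=
  ∀ e ∈ E, (∀ v ∈ e, σ e v ∈ e) ∧ (∀ v ∈ e, ∀ w ∈ e, ∃ k, (σ e)^[k] v = w)

section IterateReachable

variable {α : Type*} {f : α → α} {s : Finset α}

theorem Finset.bijOn_of_iterate_reachable (hf : Set.MapsTo f s s)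
    (hreach : ∀ v ∈ s, ∀ w ∈ s, ∃ k, f^[k] v = w) : Set.BijOn f s s := by
  refine (s.finite_toSet.surjOn_iff_bijOn_of_mapsTo hf).1 fun w hw => ?_
  obtain ⟨k, hk⟩ := hreach (f w) (hf hw) w hw
  refine ⟨f^[k] w, hf.iterate k hw, ?_⟩
  rw [← Function.iterate_succ_apply' f k w, Function.iterate_succ_apply, hk]

theorem Finset.apply_ne_of_iterate_reachable (hs : 1 < s.card)
    (hreach : ∀ v ∈ s, ∀ w ∈ s, ∃ k, f^[k] v = w) {v : α} (hv : v ∈ s) : f v ≠ v := by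
  intro hfix
  obtain ⟨w, hw, hwv⟩ := s.exists_mem_ne hs v
  obtain ⟨k, hk⟩ := hreach v hv w hw
  exact hwv (hk ▸ Function.iterate_fixed hfix k)

end IterateReachable

namespace IsCycling

variable {V : Type*} {E : Finset (Finset V)} {σ : Finset V → V → V}

theorem validChoice (hσ : IsCycling E σ) (hE : ∀ e ∈ E, 2 ≤ e.card) (T : Finset V) :
    ValidChoice E T fun v e => σ e v :=
  fun v _ e he hv =>
    ⟨(hσ e he).1 v hv, Finset.apply_ne_of_iterate_reachable (hE e he) (hσ e he).2 hv⟩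

theorem cancellative (hσ : IsCycling E σ) (T : Finset V) :
    Cancellative E T fun v e => σ e v :=
  fun e he _ => Finset.bijOn_of_iterate_reachable (hσ e he).1 (hσ e he).2

end IsCycling

theorem readyToFire_hypergraph_implies_digraph_general {V : Type*} [Fintype V] [DecidableEq V]
    (E : Finset (Finset V)) (q : V) (hE : ∀ e ∈ E, 2 ≤ e.card) (c : V → ℕ)
    (A : Finset V) (hready : ReadyToFire E A c) (σ : Finset V → V → V) (hσ : IsCycling E σ) :
    ∀ i : V, i ≠ q →
      0 ≤ (c i : ℤ) - (if i ∈ A then ((E.filter fun e => i ∈ e).card : ℤ) else 0)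
        + ∑ u ∈ A, ((E.filter fun e => u ∈ e ∧ σ e u = i).card : ℤ) :=
  fun i _ => hready _ (hσ.validChoice hE A) (hσ.cancellative A) i

/-- If a nonempty set `A` of nonsink vertices is ready to fire in the hypergraph `H`,
then for every cycling `C` of `H` the set `A` is ready to fire in the digraph `D_C(H)`:
simultaneously firing `A` in `D_C(H)` (each `v ∈ A` loses one chip per incident hyperedge
and each directed edge `(u, σ_e u)` with `u ∈ A` passes one chip) leaves all nonsink
coordinates nonnegative. -/
theorem readyToFire_hypergraph_implies_digraph {V : Type*} [Fintype V] [DecidableEq V]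
    (E : Finset (Finset V)) (q : V) (hE : ∀ e ∈ E, 2 ≤ e.card) (c : V → ℕ)
    (A : Finset V) (hA : A.Nonempty) (hAq : ∀ i ∈ A, i ≠ q)
    (hready : ReadyToFire E A c) (σ : Finset V → V → V) (hσ : IsCycling E σ) :
    ∀ i : V, i ≠ q →
      0 ≤ (c i : ℤ) - (if i ∈ A then ((E.filter fun e => i ∈ e).card : ℤ) else 0)
        + ∑ u ∈ A, ((E.filter fun e => u ∈ e ∧ σ e u = i).card : ℤ) :=
  readyToFire_hypergraph_implies_digraph_general E q hE c A hready σ hσ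
end

section
/- Let H be a connected hypergraph with sink q. A configuration c on the nonsink vertices is superstable for H if and only if there exists a vertex-induced cycling C of H such that c is a superstable configuration (equivalently a G-parking function) of the Eulerian digraph D_C(H). -/
open scoped Classical

/-- `c` is superstable for the hypergraph `H`: no nonempty set `T` of nonsink vertices
satisfies `deg_T(i) ≤ c_i` for all `i ∈ T`. -/
def HSuperstable {V : Type*} [Fintype V] [DecidableEq V] (E : Finset (Finset V)) (q : V)
    (c : V → ℕ) : Prop :=
  ¬ ∃ T : Finset V, T.Nonempty ∧ (∀ i ∈ T, i ≠ q) ∧ ∀ i ∈ T, degT E T i ≤ c i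

/-- `σ` is the cycling of `H` induced by the linear order on vertices given by the
embedding `β : V ↪ ℕ`: within each hyperedge `e`, `σ e v` is the next-larger element of
`e`, or the minimum of `e` if `v` is the maximum of `e`. -/
def IsInducedCycling {V : Type*} (E : Finset (Finset V)) (β : V ↪ ℕ)
    (σ : Finset V → V → V) : Prop :=
  ∀ e ∈ E, ∀ v ∈ e, σ e v ∈ e ∧
    ((∃ w ∈ e, β v < β w) →
      β v < β (σ e v) ∧ ∀ w ∈ e, β v < β w → β (σ e v) ≤ β w) ∧
    ((∀ w ∈ e, β w ≤ β v) → ∀ w ∈ e, β (σ e v) ≤ β w)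

/-- `c` is superstable for the digraph `D_C(H)` associated to the cycling `σ`:
no nonempty set `T` of nonsink vertices can be set-fired (via the digraph reduced
Laplacian) without some coordinate going negative. -/
def DSuperstable {V : Type*} [Fintype V] [DecidableEq V] (E : Finset (Finset V)) (q : V)
    (σ : Finset V → V → V) (c : V → ℕ) : Prop :=
  ¬ ∃ T : Finset V, T.Nonempty ∧ (∀ i ∈ T, i ≠ q) ∧ ∀ i ∈ T,
    ((E.filter fun e => i ∈ e).card : ℤ) ≤
      (c i : ℤ) + ∑ u ∈ T, ((E.filter fun e => u ∈ e ∧ σ e u = i).card : ℤ)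

/-!
An induced cycling permutes every hyperedge, so in `D_C(H)` firing `T` leaves a vertex `i ∈ T`
nonnegative exactly when `c i` is at least the number of hyperedges at `i` whose cyclic
predecessor of `i` lies outside `T`. A hyperedge inside `T` never counts, which gives the easy
direction. Conversely, a superstable `c` admits a burning order starting at `q`: as long as
vertices `T` are unburnt, some `i ∈ T` has `c i < deg_T(i)` and is burnt next. Cycling each
hyperedge along this order, the earliest vertex `i` of any `T` receives chips from `T` only
along hyperedges in which `i` comes first, so all hyperedges at `i` containing an earlier vertex
count against it, and there are more than `c i` of them.
-/

open Finset

section InducedCycling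

variable {V : Type*} {E : Finset (Finset V)} {β : V ↪ ℕ} {σ : Finset V → V → V}
  {e : Finset V} {v w : V}

theorem IsInducedCycling.apply_mem (hσ : IsInducedCycling E β σ) (he : e ∈ E) (hv : v ∈ e) :
    σ e v ∈ e :=
  (hσ e he v hv).1

theorem IsInducedCycling.lt_apply (hσ : IsInducedCycling E β σ) (he : e ∈ E) (hv : v ∈ e)
    (hw : w ∈ e) (hvw : β v < β w) : β v < β (σ e v) :=
  ((hσ e he v hv).2.1 ⟨w, hw, hvw⟩).1

theorem IsInducedCycling.apply_le (hσ : IsInducedCycling E β σ) (he : e ∈ E) (hv : v ∈ e)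
    (hw : w ∈ e) (hvw : β v < β w) : β (σ e v) ≤ β w :=
  ((hσ e he v hv).2.1 ⟨w, hw, hvw⟩).2 w hw hvw

theorem IsInducedCycling.apply_le_of_apply_le (hσ : IsInducedCycling E β σ) (he : e ∈ E)
    (hv : v ∈ e) (hwrap : β (σ e v) ≤ β v) (hw : w ∈ e) : β (σ e v) ≤ β w := by
  refine (hσ e he v hv).2.2 (fun x hx => ?_) w hw
  by_contra! hvx
  exact (hσ.lt_apply he hv hx hvx).not_ge hwrap

theorem IsInducedCycling.injOn (hσ : IsInducedCycling E β σ) (he : e ∈ E) :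
    Set.InjOn (σ e) e := by
  suffices h : ∀ ⦃u u'⦄, u ∈ e → u' ∈ e → σ e u = σ e u' → ¬ β u < β u' from
    fun u hu u' hu' hσu => β.injective <|
      le_antisymm (not_lt.1 (h hu' hu hσu.symm)) (not_lt.1 (h hu hu' hσu))
  intro u u' hu hu' hσu hlt
  have h_above := hσ.lt_apply he hu hu' hlt
  have h_below := hσ.apply_le he hu hu' hlt
  rw [hσu] at h_above h_below
  have h_wrap := hσ.apply_le_of_apply_le he hu' h_below hu
  omega

theorem IsInducedCycling.bijOn (hσ : IsInducedCycling E β σ) (he : e ∈ E) :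
    Set.BijOn (σ e) e e :=
  have hmaps : Set.MapsTo (σ e) e e := fun _ hv => hσ.apply_mem he hv
  ⟨hmaps, hσ.injOn he, surjOn_of_injOn_of_card_le (σ e) hmaps (hσ.injOn he) le_rfl⟩

theorem IsInducedCycling.sum_card_filter_apply_eq [DecidableEq V] (hσ : IsInducedCycling E β σ)
    (T : Finset V) (i : V) :
    ∑ u ∈ T, #{e ∈ E | u ∈ e ∧ σ e u = i} = #{e ∈ E | ∃ u ∈ T, u ∈ e ∧ σ e u = i} := by
  rw [← card_biUnion]
  · congr 1
    ext e
    simp only [mem_biUnion, mem_filter]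
    tauto
  · intro u _ u' _ hne
    simp only [Function.onFun, disjoint_left, mem_filter]
    rintro e ⟨he, hu, rfl⟩ ⟨_, hu', hσu'⟩
    exact hne (hσ.injOn he hu hu' hσu'.symm)

/-- Firing `T` in `D_C(H)` keeps `i ∈ T` nonnegative iff `c i` covers the hyperedges at `i` in
which the cyclic predecessor of `i` lies outside `T`. -/
theorem IsInducedCycling.dSuperstable_iff [Fintype V] [DecidableEq V] {q : V} {c : V → ℕ}
    (hσ : IsInducedCycling E β σ) :
    DSuperstable E q σ c ↔ ¬ ∃ T : Finset V, T.Nonempty ∧ (∀ i ∈ T, i ≠ q) ∧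
      ∀ i ∈ T, #{e ∈ E | i ∈ e ∧ ¬ ∃ u ∈ T, u ∈ e ∧ σ e u = i} ≤ c i := by
  refine not_congr <| exists_congr fun T => and_congr_right' <| and_congr_right' <|
    forall₂_congr fun i _ => ?_
  have hsplit : #{e ∈ E | i ∈ e} = #{e ∈ E | ∃ u ∈ T, u ∈ e ∧ σ e u = i} +
      #{e ∈ E | i ∈ e ∧ ¬ ∃ u ∈ T, u ∈ e ∧ σ e u = i} := by
    rw [← card_filter_add_card_filter_not (s := {e ∈ E | i ∈ e})
      (fun e => ∃ u ∈ T, u ∈ e ∧ σ e u = i), filter_filter, filter_filter]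
    congr 2
    refine filter_congr fun e he => ⟨And.right, fun h => ⟨?_, h⟩⟩
    obtain ⟨u, -, hu, rfl⟩ := h
    exact hσ.apply_mem he hu
  rw [← Nat.cast_sum, hσ.sum_card_filter_apply_eq, hsplit]
  push_cast
  omega

end InducedCycling

section CyclicSucc

variable {V : Type*}

/-- For `v ∉ e` the value is irrelevant; inserting `v` only makes the set nonempty. -/
noncomputable def cyclicSucc (β : V ↪ ℕ) (e : Finset V) (v : V) : V :=
  if h : ∃ w ∈ e, β v < β w then Function.argminOn β {w | w ∈ e ∧ β v < β w} h
  else Function.argminOn β (insert v (e : Set V)) ⟨v, Set.mem_insert v _⟩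

theorem isInducedCycling_cyclicSucc (E : Finset (Finset V)) (β : V ↪ ℕ) :
    IsInducedCycling E β (cyclicSucc β) := by
  intro e _ v hv
  by_cases habove : ∃ w ∈ e, β v < β w
  · have hmem := Function.argminOn_mem β {w | w ∈ e ∧ β v < β w} habove
    simp only [cyclicSucc, dif_pos habove]
    refine ⟨hmem.1, fun _ => ⟨hmem.2, fun w hw hvw =>
      Function.argminOn_le β {w | w ∈ e ∧ β v < β w} ⟨hw, hvw⟩⟩,
      fun hmax => ?_⟩
    obtain ⟨w, hw, hvw⟩ := habove
    exact absurd (hmax w hw) (not_le.2 hvw)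
  · have hmem := Function.argminOn_mem β (insert v (e : Set V)) ⟨v, Set.mem_insert v _⟩
    simp only [cyclicSucc, dif_neg habove]
    refine ⟨?_, fun h => absurd h habove,
      fun _ w hw => Function.argminOn_le β _ (Set.mem_insert_of_mem v hw)⟩
    rcases hmem with hv' | he'
    · rwa [hv']
    · exact he'

end CyclicSucc

section Burning

variable {V : Type*} [DecidableEq V]

def putFirst (a : V) (β : V ↪ ℕ) : V ↪ ℕ where
  toFun x := if x = a then 0 else β x + 1
  inj' x y h := by
    by_cases hx : x = a <;> by_cases hy : y = a <;> simp_all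

theorem putFirst_apply (a : V) (β : V ↪ ℕ) (x : V) :
    putFirst a β x = if x = a then 0 else β x + 1 :=
  rfl

theorem putFirst_lt_putFirst {a x j : V} {β : V ↪ ℕ} (hj : j ≠ a) (h : x = a ∨ β x < β j) :
    putFirst a β x < putFirst a β j := by
  rcases h with rfl | h
  · simp [putFirst_apply, hj]
  · by_cases hx : x = a <;> simp [putFirst_apply, hx, hj, h]

variable [Fintype V] {E : Finset (Finset V)} {q : V} {c : V → ℕ}

theorem HSuperstable.exists_burning_order_on (hss : HSuperstable E q c) (T : Finset V)
    (hqT : q ∉ T) :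
    ∃ β : V ↪ ℕ, ∀ i ∈ T, c i < #{e ∈ E | i ∈ e ∧ ∃ x ∈ e, x ∉ T ∨ β x < β i} := by
  induction T using Finset.strongInduction with
  | H T ih =>
  rcases T.eq_empty_or_nonempty with rfl | hT
  · exact ⟨(Fintype.equivFin V).toEmbedding.trans Fin.valEmbedding, by simp⟩
  obtain ⟨i, hiT, hi⟩ : ∃ i ∈ T, c i < degT E T i := by
    by_contra! h
    exact hss ⟨T, hT, fun j hj hjq => hqT (hjq ▸ hj), h⟩
  obtain ⟨β, hβ⟩ := ih (T.erase i) (erase_ssubset hiT) fun h => hqT (mem_of_mem_erase h)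
  refine ⟨putFirst i β, fun j hj => ?_⟩
  by_cases hji : j = i
  · subst hji
    refine hi.trans_le (card_le_card fun e he => ?_)
    simp only [mem_filter] at he ⊢
    obtain ⟨x, hx, hxT⟩ := not_subset.1 he.2.2
    exact ⟨he.1, he.2.1, x, hx, Or.inl hxT⟩
  · refine (hβ j (mem_erase.2 ⟨hji, hj⟩)).trans_le (card_le_card fun e he => ?_)
    simp only [mem_filter] at he ⊢
    obtain ⟨heE, hje, x, hx, hxj⟩ := he
    refine ⟨heE, hje, x, hx, ?_⟩
    by_cases hxi : x = i
    · exact Or.inr (putFirst_lt_putFirst hji (Or.inl hxi))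
    · rcases hxj with hxT | hlt
      · exact Or.inl fun h => hxT (mem_erase.2 ⟨hxi, h⟩)
      · exact Or.inr (putFirst_lt_putFirst hji (Or.inr hlt))

theorem HSuperstable.exists_burning_order (hss : HSuperstable E q c) :
    ∃ β : V ↪ ℕ, ∀ i, i ≠ q → c i < #{e ∈ E | i ∈ e ∧ ∃ x ∈ e, β x < β i} := by
  obtain ⟨β, hβ⟩ := hss.exists_burning_order_on {q}ᶜ (by simp)
  refine ⟨putFirst q β, fun i hiq => (hβ i (by simpa)).trans_le (card_le_card fun e he => ?_)⟩
  simp only [mem_filter] at he ⊢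
  obtain ⟨heE, hie, x, hx, hxi⟩ := he
  refine ⟨heE, hie, x, hx, putFirst_lt_putFirst hiq ?_⟩
  simpa using hxi

theorem IsInducedCycling.hSuperstable_of_dSuperstable {β : V ↪ ℕ} {σ : Finset V → V → V}
    (hσ : IsInducedCycling E β σ) (hD : DSuperstable E q σ c) : HSuperstable E q c := by
  rw [hσ.dSuperstable_iff] at hD
  rintro ⟨T, hT, hTq, hdeg⟩
  refine hD ⟨T, hT, hTq, fun i hi => (card_le_card fun e he => ?_).trans (hdeg i hi)⟩
  simp only [mem_filter] at he ⊢
  obtain ⟨heE, hie, hpred⟩ := he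
  refine ⟨heE, hie, fun hsub => hpred ?_⟩
  obtain ⟨u, hu, rfl⟩ := (hσ.bijOn heE).surjOn hie
  exact ⟨u, hsub hu, hu, rfl⟩

theorem IsInducedCycling.dSuperstable_of_burning_order {β : V ↪ ℕ} {σ : Finset V → V → V}
    (hσ : IsInducedCycling E β σ)
    (hβ : ∀ i, i ≠ q → c i < #{e ∈ E | i ∈ e ∧ ∃ x ∈ e, β x < β i}) :
    DSuperstable E q σ c := by
  rw [hσ.dSuperstable_iff]
  rintro ⟨T, hT, hTq, hdeg⟩
  obtain ⟨i, hi, hmin⟩ := T.exists_min_image β hT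
  refine (hβ i (hTq i hi)).not_ge ((card_le_card fun e he => ?_).trans (hdeg i hi))
  simp only [mem_filter] at he ⊢
  obtain ⟨heE, hie, x, hx, hxi⟩ := he
  refine ⟨heE, hie, ?_⟩
  rintro ⟨u, hu, hue, rfl⟩
  exact (hσ.apply_le_of_apply_le heE hue (hmin u hu) hx).not_gt hxi

end Burning

theorem hsuperstable_iff_exists_induced_cycling_general {V : Type*} [Fintype V] [DecidableEq V]
    (E : Finset (Finset V)) (q : V) (c : V → ℕ) :
    HSuperstable E q c ↔
      ∃ (β : V ↪ ℕ) (σ : Finset V → V → V),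
        IsInducedCycling E β σ ∧ DSuperstable E q σ c := by
  constructor
  · intro hss
    obtain ⟨β, hβ⟩ := hss.exists_burning_order
    have hσ := isInducedCycling_cyclicSucc E β
    exact ⟨β, cyclicSucc β, hσ, hσ.dSuperstable_of_burning_order hβ⟩
  · rintro ⟨β, σ, hσ, hD⟩
    exact hσ.hSuperstable_of_dSuperstable hD

/-- A configuration `c` is superstable for a connected hypergraph `H` with sink `q` iff
it is superstable (equivalently, a `G`-parking function) for the Eulerian digraph
`D_C(H)` of some vertex-induced cycling `C` of `H`. -/
theorem hsuperstable_iff_exists_induced_cycling {V : Type*} [Fintype V] [DecidableEq V]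
    (E : Finset (Finset V)) (q : V) (hconn : HConnected E) (hE : ∀ e ∈ E, 2 ≤ e.card)
    (c : V → ℕ) :
    HSuperstable E q c ↔
      ∃ (β : V ↪ ℕ) (σ : Finset V → V → V),
        IsInducedCycling E β σ ∧ DSuperstable E q σ c :=
  hsuperstable_iff_exists_induced_cycling_general E q c
end
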